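/- arXiv:1801.01689 — 4 statements merged into one kernel-verified Lean document; each statement's English description precedes it below -/
import Mathlib

section
/- If the optimal makespan M of the continuous motion planning instance satisfies both inequalities: (a) the convex hull area at some time is at least 3.479(⌊N/(20M)⌋ − √2·π(2√N + M)) + 2√3(N − ⌊N/(20M)⌋), and (b) the convex hull area at every time is at most 2√3·N + 2π(√N + M)·M, then M ∈ Ω(N^{1/4}); concretely, there exist constants c > 0 and N₀ such that for all N ≥ N₀, M ≥ c·N^{1/4}. -/
open Real

lemma sqrt2_le : Real.sqrt 2 ≤ 1.415 := by
  nlinarith [Real.sq_sqrt (show (0:ℝ) ≤ 2 by norm_num), Real.sqrt_nonneg 2]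

lemma sqrt3_le : Real.sqrt 3 ≤ 1.7325 := by
  nlinarith [Real.sq_sqrt (show (0:ℝ) ≤ 3 by norm_num), Real.sqrt_nonneg 3]


set_option maxHeartbeats 1000000 in
/-- If for every N the makespan M N (at least 1) admits a convex-hull-area function
satisfying the lower bound at some time and the upper bound at every time, then
M N ∈ Ω(N^{1/4}). -/
theorem stmt_6 (M : ℕ → ℝ) (Area : ℕ → ℝ → ℝ) (hM : ∀ N, 1 ≤ M N)
    (hlow : ∀ N : ℕ, ∃ t ∈ Set.Icc (0:ℝ) (M N),
      3.479 * ((⌊(N : ℝ) / (20 * M N)⌋₊ : ℝ) - Real.sqrt 2 * π * (2 * Real.sqrt N + M N))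
        + 2 * Real.sqrt 3 * ((N : ℝ) - (⌊(N : ℝ) / (20 * M N)⌋₊ : ℝ)) ≤ Area N t)
    (hup : ∀ N : ℕ, ∀ t ∈ Set.Icc (0:ℝ) (M N),
      Area N t ≤ 2 * Real.sqrt 3 * (N : ℝ) + 2 * π * (Real.sqrt N + M N) * M N) :
    ∃ c > 0, ∃ N₀ : ℕ, ∀ N ≥ N₀, c * (N : ℝ) ^ ((1 : ℝ)/4) ≤ M N := by
  refine ⟨0.001, by norm_num, 10^8, fun N hN => ?_⟩
  by_contra hlt
  push_neg at hlt
  obtain ⟨t, ht, hl⟩ := hlow N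
  have hu' := hup N t ht
  have hLU := hl.trans hu'
  clear hl hu' hlow hup ht
  set m := M N with hmdef
  have hm : 1 ≤ m := hM N
  set u : ℝ := (N : ℝ) ^ ((1:ℝ)/4) with hudef
  have hNpos : (0:ℝ) ≤ N := Nat.cast_nonneg N
  have hu0 : 0 ≤ u := Real.rpow_nonneg hNpos _
  have hu4 : u ^ 4 = (N : ℝ) := by
    rw [hudef, ← Real.rpow_natCast ((N:ℝ) ^ ((1:ℝ)/4)) 4, ← Real.rpow_mul hNpos]
    norm_num
  have hu2 : u ^ 2 = Real.sqrt N := by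
    rw [hudef, ← Real.rpow_natCast ((N:ℝ) ^ ((1:ℝ)/4)) 2, ← Real.rpow_mul hNpos,
      Real.sqrt_eq_rpow]
    norm_num
  have hNbig : (10:ℝ)^8 ≤ (N : ℝ) := by
    have h : ((10^8 : ℕ) : ℝ) ≤ (N : ℝ) := Nat.cast_le.mpr hN
    push_cast at h; linarith
  have hu100 : (100:ℝ) ≤ u := by
    by_contra h
    push_neg at h
    have h4 : u ^ 4 < 100 ^ 4 := pow_lt_pow_left₀ h hu0 (by norm_num)
    rw [hu4] at h4
    norm_num at h4
    linarith
  set s : ℝ := Real.sqrt N with hsdef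
  set F : ℝ := (⌊(N : ℝ) / (20 * m)⌋₊ : ℝ) with hFdef
  have hF0 : 0 ≤ F := Nat.cast_nonneg _
  have hmpos : (0:ℝ) < 20 * m := by linarith
  have hB : (N : ℝ) < (F + 1) * (20 * m) := by
    have h1 : (N : ℝ) / (20 * m) < F + 1 := by
      have := Nat.lt_floor_add_one ((N : ℝ) / (20 * m))
      push_cast at this
      linarith
    exact (div_lt_iff₀ hmpos).mp h1
  have h2 := sqrt2_le
  have h3 := sqrt3_le
  have hpi : π ≤ 3.15 := Real.pi_lt_d2.le
  have hpi0 : 0 < π := Real.pi_pos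
  have hs0 : 0 ≤ s := Real.sqrt_nonneg _
  have h20 : 0 ≤ Real.sqrt 2 := Real.sqrt_nonneg _
  have h30 : 0 ≤ Real.sqrt 3 := Real.sqrt_nonneg _
  have hsm : (0:ℝ) ≤ 2 * s + m := by linarith
  have hA : Real.sqrt 2 * π * (2 * s + m) ≤ 1.415 * (3.15 * (2 * s + m)) := by
    have h1 : π * (2 * s + m) ≤ 3.15 * (2 * s + m) := mul_le_mul_of_nonneg_right hpi hsm
    have h2' : Real.sqrt 2 * (π * (2 * s + m)) ≤ 1.415 * (3.15 * (2 * s + m)) :=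
      mul_le_mul h2 h1 (by positivity) (by norm_num)
    linarith [h2']
  have hBb : π * (s + m) * m ≤ 3.15 * (s + m) * m :=
    mul_le_mul_of_nonneg_right
      (mul_le_mul_of_nonneg_right hpi (by linarith)) (by linarith)
  have hF3 : (3.479 - 2 * Real.sqrt 3) * F ≤
      3.479 * (Real.sqrt 2 * π * (2 * s + m)) + 2 * (π * (s + m) * m) := by
    linarith [hLU]
  have hc : (3.479 - 2 * 1.7325) * F ≤ (3.479 - 2 * Real.sqrt 3) * F := by
    have := mul_nonneg (show (0:ℝ) ≤ 1.7325 - Real.sqrt 3 by linarith) hF0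
    linarith [this]
  have hFle : 0.014 * F ≤ 15.6 * (2 * u^2 + m) + 6.3 * (u^2 + m) * m := by
    rw [← hu2] at hA hBb hF3
    linarith [hA, hBb, hF3, hc]
  have hB' : u ^ 4 < (F + 1) * (20 * m) := by rw [hu4]; exact hB
  clear hLU hA hBb hF3 hc hB
  have key : (20 * m) * (0.014 * F) ≤
      (20 * m) * (15.6 * (2 * u^2 + m) + 6.3 * (u^2 + m) * m) :=
    mul_le_mul_of_nonneg_left hFle (by linarith)
  have hm0 : (0:ℝ) < m := by linarith
  have c1 : m * u^2 ≤ 0.001 * u^3 := by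
    have := mul_nonneg (show (0:ℝ) ≤ 0.001 * u - m by linarith) (sq_nonneg u)
    nlinarith [this]
  have c2 : m * m ≤ 0.000001 * (u * u) :=
    (mul_le_mul hlt.le hlt.le (by linarith) (by linarith)).trans (by ring_nf; nlinarith [sq_nonneg u])
  have c3 : u^2 * (m * m) ≤ 0.000001 * u^4 := by
    have := mul_le_mul_of_nonneg_left c2 (sq_nonneg u)
    nlinarith [this]
  have c4 : m * (m * m) ≤ 0.000000001 * u^3 := by
    have := mul_le_mul hlt.le c2 (mul_self_nonneg m) (by linarith)
    nlinarith [this]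
  have hu3 : u^3 ≤ 0.01 * u^4 := by
    have := mul_nonneg (show (0:ℝ) ≤ u - 100 by linarith) (pow_nonneg hu0 3)
    nlinarith [this]
  have hsq : (10000:ℝ) ≤ u^2 := by
    have := mul_le_mul hu100 hu100 (by norm_num) (by linarith)
    nlinarith [this]
  have hu2b : u^2 ≤ 0.0001 * u^4 := by
    have := mul_nonneg (show (0:ℝ) ≤ u^2 - 10000 by linarith) (sq_nonneg u)
    nlinarith [this]
  have hcube : (1000000:ℝ) ≤ u^3 := by
    have := mul_le_mul hsq hu100 (by norm_num) (by positivity)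
    nlinarith [this]
  have hub : u ≤ 0.000001 * u^4 := by
    have := mul_le_mul_of_nonneg_right hcube hu0
    nlinarith [this]
  linarith [key, hB', c1, c3, c4, hu3, hu2b, hub, hlt, hm0]
end

section
/- In a 2×3 grid graph (vertices {0,1}×{0,1,2}, edges between orthogonally adjacent cells), any permutation of 6 labeled tokens placed on the vertices can be achieved by a sequence of at most 7 parallel steps, where in each step every token either stays or moves to an adjacent vertex, no two tokens occupy the same vertex after a step, and no two tokens swap positions along an edge in one step. -/
set_option maxRecDepth 40000
set_option maxHeartbeats 2000000

/-- Orthogonal adjacency of cells in the 2×3 grid. -/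
def GridAdj (a b : Fin 2 × Fin 3) : Prop :=
  (a.1 = b.1 ∧ ((a.2 : ℕ) + 1 = (b.2 : ℕ) ∨ (b.2 : ℕ) + 1 = (a.2 : ℕ))) ∨
  (a.2 = b.2 ∧ ((a.1 : ℕ) + 1 = (b.1 : ℕ) ∨ (b.1 : ℕ) + 1 = (a.1 : ℕ)))

/-- A transformation step between two fully occupied configurations of 6 labeled
tokens on the 2×3 grid: every token stays or moves to an adjacent vertex
(injectivity is automatic since configurations are bijections), and no two tokens
swap positions along an edge. -/
def GridStep (C₁ C₂ : Fin 6 ≃ Fin 2 × Fin 3) : Prop :=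
  (∀ t, C₁ t = C₂ t ∨ GridAdj (C₁ t) (C₂ t)) ∧
  (∀ s t, s ≠ t → ¬(C₂ s = C₁ t ∧ C₂ t = C₁ s))

instance (a b : Fin 2 × Fin 3) : Decidable (GridAdj a b) := by
  unfold GridAdj; infer_instance

namespace Grid6

/-- Fixed indexing of the grid: 0,1,2 top row, 3,4,5 bottom row. -/
def eF : Fin 6 → Fin 2 × Fin 3
  | 0 => (0,0) | 1 => (0,1) | 2 => (0,2) | 3 => (1,0) | 4 => (1,1) | 5 => (1,2)

def eI : Fin 2 × Fin 3 → Fin 6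
  | (0,0) => 0 | (0,1) => 1 | (0,2) => 2 | (1,0) => 3 | (1,1) => 4 | (1,2) => 5

def e : Fin 6 ≃ Fin 2 × Fin 3 := ⟨eF, eI, by decide, by decide⟩

/-- The six basic cyclic moves, as functions on vertex indices. -/
def mv : Fin 6 → Fin 6 → Fin 6
  | 0 => fun x => match x with | 0 => 1 | 1 => 4 | 4 => 3 | 3 => 0 | y => y
  | 1 => fun x => match x with | 1 => 0 | 4 => 1 | 3 => 4 | 0 => 3 | y => y
  | 2 => fun x => match x with | 1 => 2 | 2 => 5 | 5 => 4 | 4 => 1 | y => y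
  | 3 => fun x => match x with | 2 => 1 | 5 => 2 | 4 => 5 | 1 => 4 | y => y
  | 4 => fun x => match x with | 0 => 1 | 1 => 2 | 2 => 5 | 5 => 4 | 4 => 3 | 3 => 0
  | 5 => fun x => match x with | 1 => 0 | 2 => 1 | 5 => 2 | 4 => 5 | 3 => 4 | 0 => 3

def mvI : Fin 6 → Fin 6 → Fin 6
  | 0 => mv 1 | 1 => mv 0 | 2 => mv 3 | 3 => mv 2 | 4 => mv 5 | 5 => mv 4

lemma mv_li : ∀ k x, mvI k (mv k x) = x := by decide
lemma mv_ri : ∀ k x, mv k (mvI k x) = x := by decide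

def mvPerm (k : Fin 6) : Equiv.Perm (Fin 6) := ⟨mv k, mvI k, mv_li k, mv_ri k⟩

/-- The basic moves as permutations of the grid. -/
def M (k : Fin 6) : (Fin 2 × Fin 3) ≃ (Fin 2 × Fin 3) := e.symm.trans ((mvPerm k).trans e)

lemma M_apply (k : Fin 6) (x : Fin 6) : M k (e x) = e (mv k x) := by
  simp only [M, Equiv.trans_apply, Equiv.symm_apply_apply]
  rfl

lemma M_valid : ∀ k : Fin 6,
    (∀ v, v = M k v ∨ GridAdj v (M k v)) ∧
    (∀ u v, u ≠ v → ¬(M k u = v ∧ M k v = u)) := by decide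

lemma step_trans (C : Fin 6 ≃ Fin 2 × Fin 3) (k : Fin 6) : GridStep C (C.trans (M k)) := by
  obtain ⟨h1, h2⟩ := M_valid k
  constructor
  · intro t; exact h1 (C t)
  · intro s t hst h
    exact h2 (C s) (C t) (fun hh => hst (C.injective hh)) h

lemma step_refl (C : Fin 6 ≃ Fin 2 × Fin 3) : GridStep C C :=
  ⟨fun _ => Or.inl rfl, fun s t hst h => hst (C.injective h.1)⟩

lemma step_relabel (f : Fin 6 ≃ Fin 6) {C₁ C₂ : Fin 6 ≃ Fin 2 × Fin 3} (h : GridStep C₁ C₂) :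
    GridStep (f.trans C₁) (f.trans C₂) :=
  ⟨fun t => h.1 (f t), fun s t hst => h.2 (f s) (f t) (fun hh => hst (f.injective hh))⟩

/-- Lehmer decoding of a number below 720 into a permutation of `{0,…,5}` (as a list). -/
def decodeL (n : ℕ) : List ℕ :=
  let r : List ℕ := [0,1,2,3,4,5]
  let i0 := n / 120
  let r0 := r.eraseIdx i0
  let i1 := n % 120 / 24
  let r1 := r0.eraseIdx i1
  let i2 := n % 24 / 6
  let r2 := r1.eraseIdx i2
  let i3 := n % 6 / 2
  let r3 := r2.eraseIdx i3
  let i4 := n % 2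
  [r.getD i0 0, r0.getD i1 0, r1.getD i2 0, r2.getD i3 0, r3.getD i4 0,
    (r3.eraseIdx i4).getD 0 0]

def dec (n : ℕ) (x : Fin 6) : Fin 6 :=
  ⟨(decodeL n).getD x.val 0 % 6, Nat.mod_lt _ (by norm_num)⟩

/-- Lehmer encoding. -/
def enc (f : Fin 6 → Fin 6) : ℕ :=
  let l0 : List ℕ := [0,1,2,3,4,5]
  let i0 := l0.idxOf (f 0).val
  let l1 := l0.eraseIdx i0
  let i1 := l1.idxOf (f 1).val
  let l2 := l1.eraseIdx i1
  let i2 := l2.idxOf (f 2).val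
  let l3 := l2.eraseIdx i2
  let i3 := l3.idxOf (f 3).val
  let l4 := l3.eraseIdx i3
  let i4 := l4.idxOf (f 4).val
  i0 * 120 + i1 * 24 + i2 * 6 + i3 * 2 + i4

lemma encdec : ∀ n : Fin 720, enc (dec n.val) = n.val := by decide

lemma dec_inj : ∀ n : Fin 720, ∀ x y : Fin 6, dec n.val x = dec n.val y → x = y := by decide

noncomputable def decPerm (n : Fin 720) : Equiv.Perm (Fin 6) :=
  Equiv.ofBijective (dec n.val)
    ((Fintype.bijective_iff_injective_and_card _).2 ⟨fun _ _ hxy => dec_inj n _ _ hxy, rfl⟩)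

lemma decPerm_apply (n : Fin 720) (x : Fin 6) : decPerm n x = dec n.val x := rfl

lemma decPerm_inj : Function.Injective decPerm := by
  intro n m h
  have hf : dec n.val = dec m.val := funext fun x => by
    rw [← decPerm_apply, ← decPerm_apply, h]
  have h2 := encdec n
  rw [hf, encdec m] at h2
  exact Fin.ext h2.symm

lemma decPerm_surj : Function.Surjective decPerm := by
  have hcard : Fintype.card (Equiv.Perm (Fin 6)) = 720 := by
    rw [Fintype.card_perm, Fintype.card_fin]
    norm_num [Nat.factorial]
  exact ((Fintype.bijective_iff_injective_and_card decPerm).2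
    ⟨decPerm_inj, by simp [hcard]⟩).2

/-- Word table: entry `n` is a word of moves realizing the permutation with Lehmer code `n`. -/
def wtable : List (List (Fin 6)) := [[],[2,0,5],[1,3,4],[4,2,5,5],[4,4,3,5],[1,2,0,5,0],[1,2,1,4,4],[1,2,2,0],[1,5,0,4],[5,3,4],[5,3,0],[1,2,2,4],[5,1,4,0],[1,2,4],[0,5,3,0,5],[5,0],[0,0,4,4],[1,3,0],[5,2,4],[0,0,4,0],[1,4],[2,0,5,1,4],[1,2,0],[0,4,0,5,1,2],[3,1,4],[0,5,5,0],[1,3,0,2],[0,0,4,4,2],[0,2,0,3,5],[1,2,4,2],[5,3,4,2],[1,5,0,4,2],[1,2,2,4,2],[0,3,1,5],[0,3,0,0,5,0],[0,3,0,0,3],[1,3,0,4,1],[1,2,0,2],[2,2,0,5],[0,5,3],[0,0,4,0,2],[5,2,4,2],[1,3,4,2],[2,0,0,2,5],[2],[4,1],[2,1,3,4],[1,3,4,4,1],[3,5,2,4],[0,4,0,3,5],[0,2,1,3,5],[0,2,5,5],[3,1,3,0],[0,2,5,1,3],[0,2,5,5,2],[0,0,2,4,3,5],[0,2,5,1],[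0,2,1,3,1],[0,3,0,2,4],[0,2,4,2,4,0],[0,3,5,2,4,0],[3,0,0,2,5],[0,3,0,2,0],[0,2,5,1,2,2],[2,5,3,0],[0,2,5,5,3],[0,2,5,1,2],[0,2,1,3,1,2],[0,3,4,4],[2,0,3,0,4],[2,1,5,0,4],[0,0,3,4,2,1],[0,4,0,5,5],[0,2,0,0,3,5],[0,5,1,4],[3],[0,2,1,5,5],[0,4,3,5],[0,0,2,5],[0,0,4,0,3],[0,5,2],[2,2,1,4],[1,2,0,3],[0,4,0,5,1],[0,3,0,0,2],[5,1,2,5],[0,3,0,4],[1,2,2,4,3],[1,3,1,2,5],[4,0,4,4],[1,2,4,3],[5,1,4,0,3],[0,0,4,4,3],[0,0,2,1],[0,2,0,5,1,2],[3,0,5],[3,1,2,4],[1,2,0,2,2],[2,4,1],[0,5],[3,5,3,4],[0,0,2,5,3],[0,0,2,1,3],[0,0,2,2,5,5],[1,4,0,5],[0,2,0,5,1],[0,4,1,5,1],[0,0,2,1,5,0],[1,2,2,0,0,5],[0,3,0,4,3],[2,0,0,4,0],[1,5,1,5],[0,3,0,0],[2,2,1,3,4],[1,2,4,0,5],[0,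0,2,5,5,0],[2,5,2,4],[0,4,3,5,3],[2,1,4],[2,2],[0,2,5],[0,2,1,3],[2,5,5,2],[0,2,2,5,5],[0,2,4,3,5],[0,4,0,3],[3,0,0,2],[0,0,2,2,0,0,5],[0,3,5,3,5],[3,0,4,3],[0,0,5,0,4,2],[1,5,1,2,5],[3,5,2,4,0],[0,0,2,4,0,5],[0,0,3,0,4,1],[0,2,5,5,0],[0,0,2,0,2],[0,2,2,0,3,5],[2,5,1,2],[0,0,2,4,3],[0,0,3,4,2],[0,2,1,3,1,4],[0,2,2,1,3,5],[2,1,3,1,2],[4,4,1,5],[0,0,5,5,3],[1,2,2,4,4],[4,2,1,5],[0,0,3,1,2,2],[1,2,2,0,4],[5,0,4],[0,5,3,0],[1,3,0,4],[0,0,4,4,4],[2,0,4,0,3],[1,2,4,4],[3,1,4,0],[1,4,4],[1,3,0,2,0],[1,2,0,4],[3,5,5,1],[0,0,4,0,4],[4],[2,0],[1,3,4,4],[4,2,5],[4,4,3],[2,0,4,3],[5,1,2],[0,3,0,0,2,4],[1,3,1,2],[5,5,2],[0,3,0,4,4],[1,3,5,2],[3,4],[0,4,4,3,5],[0,4,3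],[0,2,1,5],[0,4,0,5],[0,2,0,0,3],[0,5,1,4,0],[3,0],[0,0,2,2,0,5],[1,2,2,5,2],[0,0,2,1,4],[3,1,5,1],[0,5,2,4],[2,2,1,4,4],[0,0,2],[0,0,4,0,3,4],[0,3,1,4,0,3],[1,2,0,3,4],[0,0,2,4,1,5],[1,2,2,0,0],[0,3,0,0,4],[3,0,2,5],[5,3,0,0],[1,5,1],[0],[2,0,5,0],[1,2,5,1],[0,2,2,5,3],[0,2,0,0,5],[0,0,3,0,5,5],[2,1,4,4],[2,2,4],[0,2,2,4,2],[1,2,4,0],[1,3,0,0],[5,5,1],[1,4,0],[0,2,0,5,1,4],[5,2,4,0],[0,0,2,2,5],[3,0,4,1,5],[1,2,0,0],[0,0,3,5,3],[0,0,2,2,1,5],[2,4,2,5],[0,3,1],[2,2,0,4,3],[0,3,0,0,3,4],[0,2,0,5],[0,4,2,5,5],[1,3,0,2,4],[0,4,1,5],[0,2,0,3],[0,4,2,5,3],[2,2,0],[0,5,3,4],[0,2,1,4,4,2],[0,0,3,5,5],[0,3,1,2,5],[2,4,4,3],[2,4],[0,5,0],[4,0,2],[2,0,0,2],[0,0,2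,5,3,0],[2,1,3,4,4],[4,0,5,5],[1,3,1,2,4],[1,3,5,2,4],[0,0,2,0,2,2],[4,0,3,5],[2,0,0,3,5],[3,0,4],[0,2,0,4,0,3],[0,0,2,1,4,4],[0,0,5,1,5],[0,0,2,2,0],[0,0,2,2,4,3],[3,0,2,0],[0,3,5,5,1],[1,5,1,4,0],[4,3,5,3],[0,0,2,4],[2,5,1,2,2],[3,4,4],[0,4,4,3],[0,2,5,2],[0,2,1],[0,4,0],[0,2,0,0,3,4],[0,2,4,1,5],[0,3,5,3],[1,5,1,2],[0,2,2,1,5],[3,0,0,2,4],[0,0,2,2,0,0],[2,2,4,2],[2,1,4,4,2],[0,2,2,0,3],[0,3,5,5],[0,2,2,0,0,5],[0,0,2,4,0],[0,2,2,0,5],[1,4,0,2],[0,5,3,4,2,1],[0,2,2,1,3],[0,2,4,0,5],[0,0,2,2,5,2],[0,2],[0,2,1,3,4],[1,2,5,1,2],[0,2,2,5],[0,2,4,3],[0,4,0,3,4],[2,2,4,4],[1,3,1,2,2],[0,5,0,4,0],[2,4,4,0],[5,1,2,2],[1,2,4,0,4],[3,0,2],[0,0,2,0,3,5],[1,5,1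,4],[2,2,0,4,0],[0,0,2,4,1],[1,2,2,0,0,4],[3,0,4,1],[0,5,2,4,2],[0,3,1,4,0],[1,4,0,4],[0,0,2,2],[3,0,0,3,5],[3,4,2],[3,4,4,1],[0,4],[0,2,0,4,3],[0,0,3,0,5],[0,2,0,0],[0,4,4,1,5],[2,2,0,4],[0,3,1,2],[0,0,5,1,3],[0,0,2,2,0,4,3],[0,0,3,5],[0,3,1,4],[2,4,2],[1,2,1,3,5],[0,2,2,1,5,0],[4,0,2,2],[0,0,2,2,1],[0,5,3,4,2],[2,2,0,2],[0,5,0,4],[2,4,4],[2,0,0,2,4],[4,0,2,4],[0,2,0,0,2,5],[0,4,1],[0,2,0],[0,4,2,5],[3,4,2,1],[0,2,0,3,4],[1,5,5,3],[0,4,2,1,5],[1,3,0,4,4],[0,0,5,5],[4,2,0,0],[0,0,3,1,3],[4,4,1],[1,4,4,2],[2,0,2,1],[4,2,1],[1,2,1,5,5],[0,0,4,0,4,2],[5,0,4,2],[0,0,3,1,5],[4,2,0],[1,4,4,4],[2,0,4,0],[4,4,0],[2,0,2],[4,2],[4,4],[2,0,4],[1,2,5,5,3],[4,2,5,2],[5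,1,4],[1,2,4,1],[1,3,1,4],[5],[5,5,0],[1,3],[5,2],[0,0,4,0,5],[1],[2,0,5,1],[1,2,0,5],[1,2,2,1,4],[1,2,2,0,5],[1,2,1,4],[5,3,0,5],[1,2,2],[1,5,0],[5,3],[1,2],[2,0,5,1,2],[0,0,4],[1,3,0,5],[0,4,2,1,4,4],[1,4,1],[3,0,0,4],[0,5,1,2,2],[0,4,2,4,4],[3,1],[0,5,5,3],[0,4,2,4,0],[0,0,2,5,1],[0,0,3,0,2,4],[2,5],[4,1,5],[2,1,3],[2,2,5,3],[0,0,3,0,2,0],[0,2,5,3,0],[0,3,0,4,1],[0,3,0,0,3,5],[2,5,5,0],[0,0,2,0,4],[0,0,3,4,4],[0,2,1,5,0,4],[0,3,4,2],[0,0,2,0,0],[2,1,3,1,4],[0,5,3,5],[3,1,2],[0,0,3,0,4,4],[2,4,1,5],[0,5,5],[3,5,3],[0,5,1,3],[0,0,2,1,3,5],[0,3,1,3,0],[1,4,0,5,5],[0,5,3,1],[0,0,3,1,2,4],[2,2,1,5,0],[5,3,4,2,1],[0,0,2,5,5,3],[0,0,5,1,4,0],[0,3,1,5,1],[0,3,0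,0,5],[2,2,1,3],[0,0,2,5,1,2],[1,3,4,2,1],[2,5,2],[2,0,3,4],[2,1],[2,2,5],[0,5,1,2],[3,5,2],[0,2,2,4,4],[2,4,0,4],[0,2,1,3,5,5],[3,1,3],[0,3,5,2,4],[0,0,2,5,1,3],[0,3,0,2],[2,2,0,0,4],[2,5,3],[4,0,4,2],[0,0,2,5,5,2],[4,2,5,3,0],[0,3,4],[2,0,3,0],[2,1,5,0],[0,2,4,2,4],[0,0,2,1,3,1,2],[0,2,0,3,0,4],[0,2,2,1,4,4],[1,4,0,3,4],[0,3,4,4,1],[0,0,2,0,4,3],[2,2,0,3,4],[0,5,5,2],[3,1,2,2],[0,2,4,4,0],[0,5,1],[3,5],[0,0,4,0,3,5],[0,0,2,5,5],[1,2,0,3,5],[0,2,2,0,4,0],[0,3,4,3],[2,2,1],[1,2,4,3,5],[0,0,2,1,3,1],[0,0,4,4,3,5],[0,0,2,1,5],[1,4,0,5,1],[3,0,5,5],[0,3,0,0,2,5],[4,0,3,4,4],[0,3,0],[2,2,5,2],[2,0,0,4],[4,0,4],[2,1,3,5],[0,4,0,2,2],[0,0,3,0,2],[0,2,5,3],[0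,4,4,2],[2,5,5],[2,5,1],[4,1,5,1],[0,0,3,4],[0,2,1,5,0],[0,4,0,5,0],[2,1,3,1],[0,0,2,2,4,2],[3,0,0],[0,0,5,0,4],[0,2,0,0,2,4],[0,4,2,4],[3,1,5],[0,5,2,4,0],[0,3,0,4,1,5],[0,0,2,0],[0,3,4,2,1],[4,0,5,1,2],[0,0,3,4,4,1],[0,0,3,1,2],[1,2,2,0,4,3],[0,0,2,2,4,4],[3,0,0,3,4],[0,4,2,0,4],[1,5,5,2],[4,3],[2,0,3],[1,2,5,5,2],[4,2,5,3],[2,2,5,5],[2,1,5],[0,0,3,0,4],[3,1,2,5],[3,5,3,5],[0,4,0,2,4],[1,3,0,4,3],[0,4,4,4],[1,4,4,3],[3,1,4,0,3],[2,2,1,3,5],[0,0,2,0,3,4],[1,2,1,3,1,2],[1,2,0,4,3],[5,0,4,0],[0,5,3,0,0],[0,0,5,1,2],[0,3,1,3],[2,2,1,5],[0,3,4,3,5],[0,0,5,1,4],[0,0,2,1,5,5],[0,0,3,5,2,4],[0,4,0,4,2],[0,2,0,2,2],[0,3,0,0,5,1],[2,2,0,3],[0,4,0,4,4],[0,2,1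,4,4],[0,5,5,1],[0,5,1,5],[3,5,5],[2,4,3],[0,3,0,5],[4,0],[2,0,0],[2,0,0,3,4],[4,0,3,4],[1,2,4,1,5],[5,1],[4,2,4,4],[1,3,5],[1,3,1],[5,5],[0,0,4,0,5,5],[3,4,3],[0,0,3,1,4],[1,2,2,1],[1,5],[5,3,1],[1,2,5],[0,0,4,0,5,1],[0,0],[1,3,0,5,5],[0,4,2,1,4],[1,4,1,5],[0,5,1,4,0,3],[1,2,1],[4,2,1,4,4],[1,2,2,5],[0,0,4,1],[5,3,5],[2,2,0,0],[0,3,0,2,5],[0,2,2,0,4],[1,5,1,3],[0,3,5,2],[0,2,4,0,4],[2,0,3,0,5],[0,3],[0,2,4,2],[2,0,0,4,1],[1,2,5,1,3],[0,2,2,0,0,4],[1,4,0,3],[0,2,2,1,4],[0,2,0,5,0],[0,0,2,2,5,3],[0,4,2,5,3,0],[0,2,0,3,0],[0,5,1,2,5],[2,2,4,3],[0,2,2,4],[2,4,0],[0,2,2,0,2],[0,2,4,4],[0,2,0,2,1],[2,1,5,5],[2,0,3,5],[4,3,5],[0,0,2,4,2],[2,5,1,3],[3,0,2,4],[0,0,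2,0,3],[1,4,4,3,5],[4,0,5,1],[0,0,2,0,5,0],[2,4,2,4,0],[3,0,0,5,0],[0,0,3,1,2,5],[0,4,2,0],[0,2,0,4,0],[0,0,2,2,4],[3,0,0,3],[0,4,0,2],[1,2,5,3,0],[0,4,4],[2,5,5,3],[0,0,3,0],[0,2,0,0,4],[3,0,4,4],[0,4,2,0,0],[0,3,1,2,2],[0,0,5,1],[0,0,2,2,0,4],[0,0,3,5,2],[4,0,5],[2,0,0,5],[2,4,3,5],[0,3,0,5,5],[4,0,3],[2,0,0,3],[0,2,0,0,4,0],[0,0,3,0,0],[0,5,0,4,2],[0,4,4,0],[0,0,5,1,2,5],[0,0,2,4,4],[0,2,5,2,4],[0,2,1,4],[0,2,0,2],[0,4,2,5,2],[2,2,0,3,5],[0,4,0,4],[0,2,4,2,5],[0,2,2,0,4,3],[0,2,2,0,3,4],[0,3,5],[0,2,2,0,0],[0,0,2,4,0,4],[0,2,4,1],[0,3,5,3,4],[1,4,0,3,5],[0,2,2,1],[0,2,0,3,0,5],[0,0,2,2,0,0,4],[2,2,0,0,5],[0,2,2,1,3,4],[0,2,2,0],[0,2,4,4,3],[0,2,2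,4,3],[0,2,4,0],[2,4,0,5],[0,2,2],[0,2,4],[0,2,1,3,4,4],[0,4,0,3,4,4],[0,2,2,5,2],[1,3,5,3],[2,1,3,5,5],[5,5,3],[1,3,1,3],[4,2,4,0],[5,1,3],[0,3,1,2,4],[1,2,5,3],[0,4,4,1],[1,4,0,4,2],[0,0,3],[0,2,0,0,4,1],[1,2,1,3],[1,2,1,5,0],[0,0,2,0,5],[2,4,2,4],[0,0,2,2,1,4],[1,2,2,5,3],[1,2,5,5,0],[3,0,0,5],[0,0,5,0],[0,2,0,0,2],[0,4,2],[0,2,0,4],[1,2,2,1,5],[0,0,3,1],[4,2,0,4],[1,5,5],[0,0,5,5,2],[3,4,3,5],[2,0,2,2],[0,0,5],[4,4,2],[0,4,2,1],[1,2,5,5],[3,0,0,5,1],[1,2,2,5,5],[4,2,1,4],[4,0,5,0],[0,0,4,1,5],[1,2,1,3,1],[1,2,1,5],[0,0,3,0,4,3],[5,1,5],[4,2,4],[1,3,5,5],[1,3,1,5],[4,4,4]]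

def word (n : ℕ) : List (Fin 6) := wtable.getD n []

def fApply (w : List (Fin 6)) (x : Fin 6) : Fin 6 := w.foldl (fun y k => mv k y) x

lemma word_len : ∀ n : Fin 720, (word n.val).length ≤ 7 := by decide

lemma word_correct : ∀ n : Fin 720, ∀ x, fApply (word n.val) x = dec n.val x := by decide

def prodW (w : List (Fin 6)) : (Fin 2 × Fin 3) ≃ (Fin 2 × Fin 3) :=
  w.foldl (fun g k => g.trans (M k)) (Equiv.refl _)

lemma foldl_eq (w : List (Fin 6)) : ∀ g : (Fin 2 × Fin 3) ≃ (Fin 2 × Fin 3),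
    w.foldl (fun a k => a.trans (M k)) g = g.trans (prodW w) := by
  induction w with
  | nil => intro g; simp [prodW]
  | cons k w ih =>
    intro g
    show List.foldl _ (g.trans (M k)) w = g.trans (prodW (k :: w))
    rw [ih]
    have h : prodW (k :: w) = (M k).trans (prodW w) := by
      show List.foldl _ ((Equiv.refl _).trans (M k)) w = _
      rw [ih, Equiv.refl_trans]
    rw [h, Equiv.trans_assoc]

lemma prodW_cons (k : Fin 6) (w : List (Fin 6)) :
    prodW (k :: w) = (M k).trans (prodW w) := by
  show List.foldl _ ((Equiv.refl _).trans (M k)) w = _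
  rw [foldl_eq, Equiv.refl_trans]

lemma prodW_apply (w : List (Fin 6)) (x : Fin 6) : prodW w (e x) = e (fApply w x) := by
  induction w generalizing x with
  | nil => rfl
  | cons k w ih =>
    rw [prodW_cons]
    show prodW w (M k (e x)) = _
    rw [M_apply]
    exact ih (mv k x)

lemma prodW_append_singleton (w : List (Fin 6)) (k : Fin 6) :
    prodW (w ++ [k]) = (prodW w).trans (M k) := by
  unfold prodW
  rw [List.foldl_append]
  rfl

lemma key_step (w : List (Fin 6)) (i : ℕ) :
    GridStep (e.trans (prodW (w.take i))) (e.trans (prodW (w.take (i+1)))) := by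
  by_cases h : i < w.length
  · have ht : w.take (i+1) = w.take i ++ [w[i]] := by
      rw [List.take_succ, List.getElem?_eq_getElem h]
      rfl
    rw [ht, prodW_append_singleton, ← Equiv.trans_assoc]
    exact step_trans _ _
  · push_neg at h
    rw [List.take_of_length_le h, List.take_of_length_le (le_trans h (Nat.le_succ i))]
    exact step_refl _

end Grid6

/-- Any permutation of 6 labeled tokens on the fully occupied 2×3 grid can be achieved
by a sequence of at most 7 transformation steps. -/
theorem stmt_9 (Cs Ct : Fin 6 ≃ Fin 2 × Fin 3) :
    ∃ seq : Fin 8 → (Fin 6 ≃ Fin 2 × Fin 3),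
      seq 0 = Cs ∧ seq 7 = Ct ∧
      ∀ i : Fin 7, GridStep (seq i.castSucc) (seq i.succ) := by
  classical
  open Grid6 in
  -- the permutation of the grid to be realized
  set σ : (Fin 2 × Fin 3) ≃ (Fin 2 × Fin 3) := Cs.symm.trans Ct with hσ
  obtain ⟨n, hn⟩ := Grid6.decPerm_surj (Grid6.e.trans (σ.trans Grid6.e.symm))
  set w := Grid6.word n.val with hw
  have hprod : Grid6.prodW w = σ := by
    apply Equiv.ext
    intro v
    have hv : v = Grid6.e (Grid6.e.symm v) := (Equiv.apply_symm_apply _ _).symm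
    rw [hv]
    rw [Grid6.prodW_apply, Grid6.word_correct n]
    have := congrArg (fun p => p (Grid6.e.symm v)) hn
    simp only [Grid6.decPerm_apply] at this
    rw [this]
    simp [Equiv.trans_apply]
  set f : Fin 6 ≃ Fin 6 := Cs.trans Grid6.e.symm with hf
  refine ⟨fun i => f.trans (Grid6.e.trans (Grid6.prodW (w.take i.val))), ?_, ?_, ?_⟩
  · apply Equiv.ext
    intro x
    show Grid6.prodW (w.take 0) (Grid6.e (Grid6.e.symm (Cs x))) = Cs x
    rw [List.take_zero]
    show (Equiv.refl _) (Grid6.e (Grid6.e.symm (Cs x))) = Cs x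
    simp
  · apply Equiv.ext
    intro x
    show Grid6.prodW (w.take 7) (Grid6.e (Grid6.e.symm (Cs x))) = Ct x
    rw [List.take_of_length_le (Grid6.word_len n), hprod]
    simp [hσ, Equiv.trans_apply]
  · intro i
    have hc : (i.castSucc : Fin 8).val = i.val := rfl
    have hs : (i.succ : Fin 8).val = i.val + 1 := rfl
    simp only [hc, hs]
    exact Grid6.step_relabel f (Grid6.key_step w i.val)
end

section
/- Let λ ∈ [2, 4cos 50°). Define A(λ) = (λ/4)·(3 sin(arccos(λ/4)) − (λ/4)·tan(90° − arccos(λ/4))) + 4/√3. Then for all λ ∈ [2.1, 2.2], A(λ) ≥ 3.479, and 3.479 ≥ 1.004 · 2√3. -/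
/-!
With `t = λ / 4` we have `sin (arccos t) = √(1 - t²)` and `tan (π / 2 - arccos t) = t / √(1 - t²)`,
so the trigonometric part of `A(λ)` collapses to `t (3 - 4t²) / √(1 - t²)`. On `t ∈ [0.525, 0.55]`
this is at least `1.1696`, which after squaring is a polynomial inequality in `t`; adding
`4 / √3 ≥ 2.3094` gives `3.479`. The second claim is `√3 ≤ 1.7320509`.
-/

open Real

lemma sqrt_three_le : √3 ≤ 1.7320509 :=
  (Real.sqrt_le_left (by norm_num)).2 (by norm_num)

lemma le_four_div_sqrt_three : (2.3094 : ℝ) ≤ 4 / √3 := by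
  rw [le_div_iff₀ (by positivity)]
  linarith [sqrt_three_le]

/-- No hypothesis on `t` is needed: where `√(1 - t²) = 0` both sides vanish by `x / 0 = 0`. -/
lemma mul_three_sin_arccos_sub_mul_tan_pi_div_two_sub_arccos (t : ℝ) :
    t * (3 * sin (arccos t) - t * tan (π / 2 - arccos t)) = t * (3 - 4 * t ^ 2) / √(1 - t ^ 2) := by
  rw [sin_arccos, tan_pi_div_two_sub, tan_arccos, inv_div]
  by_cases hs : √(1 - t ^ 2) = 0
  · simp [hs]
  · have hs2 : √(1 - t ^ 2) ^ 2 = 1 - t ^ 2 :=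
      sq_sqrt (Real.sqrt_ne_zero'.1 hs).le
    field_simp
    linear_combination 3 * t * hs2

lemma sq_mul_one_sub_sq_le {t : ℝ} (ht₁ : 0.525 ≤ t) (ht₂ : t ≤ 0.55) :
    1.1696 ^ 2 * (1 - t ^ 2) ≤ (t * (3 - 4 * t ^ 2)) ^ 2 := by
  nlinarith [mul_nonneg (sub_nonneg.2 ht₁) (sub_nonneg.2 ht₂),
    sq_nonneg (t - 0.525), sq_nonneg (t - 0.55), sq_nonneg (t * t - 0.29)]

lemma le_mul_three_sub_div_sqrt {t : ℝ} (ht₁ : 0.525 ≤ t) (ht₂ : t ≤ 0.55) :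
    1.1696 ≤ t * (3 - 4 * t ^ 2) / √(1 - t ^ 2) := by
  have hpos : 0 < √(1 - t ^ 2) := Real.sqrt_pos.2 (by nlinarith)
  have hP : 0 ≤ t * (3 - 4 * t ^ 2) := by nlinarith
  rw [le_div_iff₀ hpos]
  refine (pow_le_pow_iff_left₀ (by positivity) hP two_ne_zero).1 ?_
  rw [mul_pow, sq_sqrt (by nlinarith)]
  exact sq_mul_one_sub_sq_le ht₁ ht₂

/-- The explicit Voronoi-cell area lower bound
A(λ) = (λ/4)(3 sin(arccos(λ/4)) − (λ/4) tan(90° − arccos(λ/4))) + 4/√3 satisfies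
A(λ) ≥ 3.479 for all λ ∈ [2.1, 2.2], and 3.479 ≥ 1.004 · 2√3. -/
theorem stmt_16 :
    (∀ lam ∈ Set.Icc (2.1 : ℝ) 2.2,
      3.479 ≤ (lam / 4) * (3 * Real.sin (Real.arccos (lam / 4)) -
          (lam / 4) * Real.tan (π / 2 - Real.arccos (lam / 4))) + 4 / Real.sqrt 3) ∧
    1.004 * (2 * Real.sqrt 3) ≤ 3.479 := by
  refine ⟨fun lam ⟨h₁, h₂⟩ => ?_, by linarith [sqrt_three_le]⟩
  rw [mul_three_sin_arccos_sub_mul_tan_pi_div_two_sub_arccos]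
  linarith [le_mul_three_sub_div_sqrt (t := lam / 4) (by linarith) (by linarith),
    le_four_div_sqrt_three]
end

section
/- If N labeled robots occupy distinct vertices of a square grid with mesh size 2√2 and each robot is a unit disk (radius 1) centered at its vertex, then any two robots simultaneously traversing distinct grid edges at speed at most 1 (each moving from one endpoint of its edge toward the other, both starting at integer multiples of the edge-traversal time) never overlap: the distance between their centers is at least 2 at all times. -/
/-- The vertex of the square grid of mesh size 2√2 with integer coordinates z. -/
noncomputable def gridPt (z : ℤ × ℤ) : EuclideanSpace ℝ (Fin 2) :=
  (WithLp.equiv 2 (Fin 2 → ℝ)).symm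
    ![2 * Real.sqrt 2 * (z.1 : ℝ), 2 * Real.sqrt 2 * (z.2 : ℝ)]

/-- Two grid cells are orthogonally adjacent. -/
def IntAdj (a b : ℤ × ℤ) : Prop := |a.1 - b.1| + |a.2 - b.2| = 1

/-!
The difference of the two robots' centres at time `s ∈ [0, 1]` is `2√2` times the point
`(1 - s) (a - b) + s (c - d)` of the segment between the nonzero lattice points `a - b` and
`c - d`, so it suffices that this point has ℓ¹-norm at least `1`. Along a coordinate that does
not change sign, the absolute value is affine in `s`, so if neither coordinate changes sign the
ℓ¹-norm interpolates between two values `≥ 1`. A sign change forces a jump of `2` in that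
coordinate, which exhausts the ℓ¹-length `≤ 2` of `(c - a) - (d - b)`; the other coordinate is
then constant, and it vanishes only when the robots swap along a common edge.
-/

lemma abs_lerp_of_mul_nonneg {x y s : ℝ} (hxy : 0 ≤ x * y) (hs0 : 0 ≤ s) (hs1 : s ≤ 1) :
    |(1 - s) * x + s * y| = (1 - s) * |x| + s * |y| := by
  have hs : 0 ≤ 1 - s := sub_nonneg.2 hs1
  rcases mul_nonneg_iff.1 hxy with ⟨hx, hy⟩ | ⟨hx, hy⟩
  · rw [abs_of_nonneg hx, abs_of_nonneg hy, abs_of_nonneg (by positivity)]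
  · rw [abs_of_nonpos hx, abs_of_nonpos hy,
      abs_of_nonpos (add_nonpos (mul_nonpos_of_nonneg_of_nonpos hs hx)
        (mul_nonpos_of_nonneg_of_nonpos hs0 hy))]
    ring

lemma half_le_sq_add_sq_of_one_le_abs_add_abs {x y : ℝ} (h : 1 ≤ |x| + |y|) :
    1 / 2 ≤ x ^ 2 + y ^ 2 := by
  nlinarith [sq_abs x, sq_abs y, sq_nonneg (|x| - |y|)]

lemma eq_of_mul_neg_of_abs_add_abs_le_two {x y x' y' : ℤ} (hx : x * x' < 0)
    (hstep : |x' - x| + |y' - y| ≤ 2) : x' = -x ∧ y' = y := by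
  rcases mul_neg_iff.1 hx with h | h <;> grind

lemma one_le_abs_lerp_add_abs_lerp_of_mul_neg {x y x' y' : ℤ} (hx : x * x' < 0)
    (hstep : |x' - x| + |y' - y| ≤ 2) (hanti : ¬(x' = -x ∧ y' = -y)) {s : ℝ} :
    1 ≤ |(1 - s) * x + s * x'| + |(1 - s) * y + s * y'| := by
  obtain ⟨hx', hy'⟩ := eq_of_mul_neg_of_abs_add_abs_le_two hx hstep
  have hy : y ≠ 0 := by
    rintro rfl
    exact hanti ⟨hx', by simpa using hy'⟩
  rw [hy']
  calc (1 : ℝ) ≤ |(y : ℝ)| := by exact_mod_cast Int.one_le_abs hy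
    _ = |(1 - s) * y + s * y| := by ring_nf
    _ ≤ _ := le_add_of_nonneg_left (abs_nonneg _)

lemma one_le_abs_add_abs_of_ne_zero {x y : ℤ} (h : x ≠ 0 ∨ y ≠ 0) :
    (1 : ℝ) ≤ |(x : ℝ)| + |(y : ℝ)| := by
  have : 1 ≤ |x| + |y| := by grind
  exact_mod_cast this

lemma one_le_abs_lerp_add_abs_lerp {x y x' y' : ℤ} (hxy : x ≠ 0 ∨ y ≠ 0)
    (hxy' : x' ≠ 0 ∨ y' ≠ 0) (hstep : |x' - x| + |y' - y| ≤ 2)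
    (hanti : ¬(x' = -x ∧ y' = -y)) {s : ℝ} (hs0 : 0 ≤ s) (hs1 : s ≤ 1) :
    1 ≤ |(1 - s) * x + s * x'| + |(1 - s) * y + s * y'| := by
  rcases lt_or_ge (x * x') 0 with hx | hx
  · exact one_le_abs_lerp_add_abs_lerp_of_mul_neg hx hstep hanti
  rcases lt_or_ge (y * y') 0 with hy | hy
  · rw [add_comm]
    exact one_le_abs_lerp_add_abs_lerp_of_mul_neg hy (by rwa [add_comm]) (by tauto)
  have hx : (0 : ℝ) ≤ x * x' := by exact_mod_cast hx
  have hy : (0 : ℝ) ≤ y * y' := by exact_mod_cast hy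
  rw [abs_lerp_of_mul_nonneg hx hs0 hs1, abs_lerp_of_mul_nonneg hy hs0 hs1]
  nlinarith [one_le_abs_add_abs_of_ne_zero hxy, one_le_abs_add_abs_of_ne_zero hxy']

lemma IntAdj.abs_add_abs_sub_le_two {a c b d : ℤ × ℤ} (hac : IntAdj a c) (hbd : IntAdj b d) :
    |(c.1 - d.1) - (a.1 - b.1)| + |(c.2 - d.2) - (a.2 - b.2)| ≤ 2 := by
  unfold IntAdj at *
  grind

lemma IntAdj.eq_and_eq_of_add_eq_add {a c b d : ℤ × ℤ} (hac : IntAdj a c) (hbd : IntAdj b d)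
    (hab : a ≠ b) (hmid : a + c = b + d) : c = b ∧ d = a := by
  unfold IntAdj at *
  simp only [Prod.ext_iff, Prod.fst_add, Prod.snd_add, ne_eq] at *
  grind

lemma dist_sq_gridPt_lerp (a c b d : ℤ × ℤ) (s : ℝ) :
    dist (gridPt a + s • (gridPt c - gridPt a)) (gridPt b + s • (gridPt d - gridPt b)) ^ 2 =
      8 * (((1 - s) * ((a.1 - b.1 : ℤ) : ℝ) + s * ((c.1 - d.1 : ℤ) : ℝ)) ^ 2 +
        ((1 - s) * ((a.2 - b.2 : ℤ) : ℝ) + s * ((c.2 - d.2 : ℤ) : ℝ)) ^ 2) := by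
  have h8 : (2 * √2) ^ 2 = 8 := by rw [mul_pow, Real.sq_sqrt zero_le_two]; norm_num
  rw [EuclideanSpace.dist_eq, Real.sq_sqrt (by positivity), Fin.sum_univ_two]
  simp only [gridPt, PiLp.add_apply, PiLp.smul_apply, PiLp.sub_apply, WithLp.equiv_symm_apply,
    Matrix.cons_val_zero, Matrix.cons_val_one, smul_eq_mul, Real.dist_eq, sq_abs, Int.cast_sub]
  linear_combination (((1 - s) * (a.1 - b.1 : ℝ) + s * (c.1 - d.1 : ℝ)) ^ 2 +
    ((1 - s) * (a.2 - b.2 : ℝ) + s * (c.2 - d.2 : ℝ)) ^ 2) * h8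

/-- Two unit-disk robots simultaneously traversing distinct edges of the grid of mesh
size 2√2 at unit speed, as part of a valid transformation step (distinct starts,
distinct destinations, no swap along a shared edge), never overlap: the distance
between their centers is at least 2 at all times. -/
theorem stmt_18 (a c b d : ℤ × ℤ)
    (hac : IntAdj a c) (hbd : IntAdj b d)
    (hstart : a ≠ b) (hdest : c ≠ d) (hswap : ¬(c = b ∧ d = a)) :
    ∀ t ∈ Set.Icc (0:ℝ) (2 * Real.sqrt 2),
      2 ≤ dist (gridPt a + (t / (2 * Real.sqrt 2)) • (gridPt c - gridPt a))
              (gridPt b + (t / (2 * Real.sqrt 2)) • (gridPt d - gridPt b)) := by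
  rintro t ⟨ht0, ht1⟩
  have hpos : 0 < 2 * √2 := by positivity
  have hs0 : 0 ≤ t / (2 * √2) := div_nonneg ht0 hpos.le
  have hs1 : t / (2 * √2) ≤ 1 := (div_le_one hpos).2 ht1
  have hne (p q : ℤ × ℤ) (h : p ≠ q) : p.1 - q.1 ≠ 0 ∨ p.2 - q.2 ≠ 0 := by
    contrapose! h
    exact Prod.ext (by omega) (by omega)
  -- `c - d = b - a` says that the two edges have the same midpoint
  have hanti : ¬(c.1 - d.1 = -(a.1 - b.1) ∧ c.2 - d.2 = -(a.2 - b.2)) := fun ⟨h1, h2⟩ ↦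
    hswap (hac.eq_and_eq_of_add_eq_add hbd hstart
      (by ext <;> simp only [Prod.fst_add, Prod.snd_add] <;> omega))
  have hl1 := one_le_abs_lerp_add_abs_lerp (hne a b hstart) (hne c d hdest)
    (hac.abs_add_abs_sub_le_two hbd) hanti hs0 hs1
  rw [← pow_le_pow_iff_left₀ zero_le_two dist_nonneg two_ne_zero, dist_sq_gridPt_lerp]
  linarith [half_le_sq_add_sq_of_one_le_abs_add_abs hl1]
end
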